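/- arXiv:2301.11294 — 7 statements merged into one kernel-verified Lean document; each statement's English description precedes it below -/
import Mathlib

section
/- Let f : ℝ → ℝ be convex with a minimizer x*. Let ε > 0 and let x_1, …, x_T ∈ ℝ be any sequence of bets. For each t, let g_t be a subgradient of f at x_t with |g_t| ≤ 1, and set the coin outcomes c_t := −g_t. Suppose h : ℝ → ℝ is a function such that the realized wealth satisfies ε + Σ_{t=1}^T c_t x_t ≥ h(Σ_{t=1}^T c_t). Then f((1/T) Σ_{t=1}^T x_t) − f(x*) ≤ (h*(x*) + ε)/T, where h* is the Fenchel conjugate of h. -/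
/-!
Summing the subgradient inequalities `f (xₜ) - f u ≤ cₜ (u - xₜ)` bounds the total regret against
any comparator `u` by `u · ∑ cₜ - ∑ cₜ xₜ`. The wealth guarantee turns this into
`u · ∑ cₜ - h (∑ cₜ) + ε ≤ h* u + ε`, and Jensen's inequality passes from the average loss to the
loss at the average bet.
-/

open Finset

variable {ι : Type*} {s : Finset ι}

theorem ConvexOn.map_mean_le {f : ℝ → ℝ} (hf : ConvexOn ℝ Set.univ f) (hs : s.Nonempty)
    (x : ι → ℝ) :
    f ((1 / (#s : ℝ)) * ∑ t ∈ s, x t) ≤ (∑ t ∈ s, f (x t)) / #s := by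
  have hcard : (0 : ℝ) < #s := by exact_mod_cast hs.card_pos
  have := hf.map_sum_le (t := s) (w := fun _ => 1 / (#s : ℝ)) (p := x)
    (fun _ _ => by positivity) (by simp [hcard.ne']) (fun _ _ => Set.mem_univ _)
  simpa [← Finset.mul_sum, div_eq_inv_mul] using this

/-- The online-to-batch conversion. -/
theorem ConvexOn.map_average_sub_le_of_subgradient {f : ℝ → ℝ} (hf : ConvexOn ℝ Set.univ f)
    (hs : s.Nonempty) {x g : ι → ℝ} (hsub : ∀ t ∈ s, ∀ z, g t * (z - x t) ≤ f z - f (x t))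
    (u : ℝ) :
    f ((1 / (#s : ℝ)) * ∑ t ∈ s, x t) - f u ≤ (∑ t ∈ s, -g t * (u - x t)) / #s := by
  have hcard : (0 : ℝ) < #s := by exact_mod_cast hs.card_pos
  have hregret : ∑ t ∈ s, (f (x t) - f u) ≤ ∑ t ∈ s, -g t * (u - x t) :=
    sum_le_sum fun t ht => by linarith [hsub t ht u]
  have hsplit : ∑ t ∈ s, (f (x t) - f u) = ∑ t ∈ s, f (x t) - #s * f u := by
    rw [sum_sub_distrib, sum_const, nsmul_eq_mul]
  calc f ((1 / (#s : ℝ)) * ∑ t ∈ s, x t) - f u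
      ≤ (∑ t ∈ s, f (x t)) / #s - f u := by linarith [hf.map_mean_le hs x]
    _ = (∑ t ∈ s, (f (x t) - f u)) / #s := by rw [hsplit]; field_simp
    _ ≤ (∑ t ∈ s, -g t * (u - x t)) / #s := by gcongr

theorem sum_mul_sub_le_of_wealth {c x : ι → ℝ} {h : ℝ → ℝ} {ε : ℝ}
    (hwealth : h (∑ t ∈ s, c t) ≤ ε + ∑ t ∈ s, c t * x t) {u C : ℝ}
    (hC : ∀ v, u * v - h v ≤ C) :
    ∑ t ∈ s, c t * (u - x t) ≤ C + ε := by
  have hexpand : ∑ t ∈ s, c t * (u - x t) = u * ∑ t ∈ s, c t - ∑ t ∈ s, c t * x t := by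
    rw [mul_sum, ← sum_sub_distrib]
    exact sum_congr rfl fun t _ => by ring
  linarith [hC (∑ t ∈ s, c t)]

theorem coin_betting_regret_one_dim_general
    (f : ℝ → ℝ) (hf : ConvexOn ℝ Set.univ f)
    (xstar : ℝ)
    (ε : ℝ)
    (T : ℕ) (hT : 1 ≤ T)
    (x g c : ℕ → ℝ)
    (hsub : ∀ t ∈ Finset.Icc 1 T, ∀ z : ℝ, g t * (z - x t) ≤ f z - f (x t))
    (hc : ∀ t ∈ Finset.Icc 1 T, c t = -(g t))
    (h : ℝ → ℝ)
    (hwealth : h (∑ t ∈ Finset.Icc 1 T, c t) ≤ ε + ∑ t ∈ Finset.Icc 1 T, c t * x t)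
    (C : ℝ) (hC : ∀ v : ℝ, xstar * v - h v ≤ C) :
    f ((1 / (T : ℝ)) * ∑ t ∈ Finset.Icc 1 T, x t) - f xstar ≤ (C + ε) / (T : ℝ) := by
  have hs : (Icc 1 T).Nonempty := nonempty_Icc.mpr hT
  have hcard : (#(Icc 1 T) : ℝ) = T := by simp
  have hregret : ∑ t ∈ Icc 1 T, -g t * (xstar - x t) ≤ C + ε := by
    have hcoin : ∑ t ∈ Icc 1 T, c t * (xstar - x t) = ∑ t ∈ Icc 1 T, -g t * (xstar - x t) :=
      sum_congr rfl fun t ht => by rw [hc t ht]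
    exact hcoin ▸ sum_mul_sub_le_of_wealth hwealth hC
  calc f ((1 / (T : ℝ)) * ∑ t ∈ Icc 1 T, x t) - f xstar
      ≤ (∑ t ∈ Icc 1 T, -g t * (xstar - x t)) / T := by
        simpa only [hcard] using hf.map_average_sub_le_of_subgradient hs hsub xstar
    _ ≤ (C + ε) / T := by gcongr

/-- **Lemma 2.1 (coin-betting regret, 1-d).**
If a betting strategy guarantees wealth `ε + ∑ cₜ xₜ ≥ h (∑ cₜ)` when the coin outcomes are
`cₜ = -gₜ` for subgradients `gₜ ∈ ∂f(xₜ)` with `|gₜ| ≤ 1`, then the average bet satisfies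
`f(x̄_T) - f(x*) ≤ (h*(x*) + ε)/T`, where `h*` is the Fenchel conjugate of `h`
(encoded by quantifying over all upper bounds `C` of `v ↦ x*·v - h v`). -/
theorem coin_betting_regret_one_dim
    (f : ℝ → ℝ) (hf : ConvexOn ℝ Set.univ f)
    (xstar : ℝ) (hmin : ∀ y, f xstar ≤ f y)
    (ε : ℝ) (hε : 0 < ε)
    (T : ℕ) (hT : 1 ≤ T)
    (x g c : ℕ → ℝ)
    (hsub : ∀ t ∈ Finset.Icc 1 T, ∀ z : ℝ, g t * (z - x t) ≤ f z - f (x t))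
    (hgbound : ∀ t ∈ Finset.Icc 1 T, |g t| ≤ 1)
    (hc : ∀ t ∈ Finset.Icc 1 T, c t = -(g t))
    (h : ℝ → ℝ)
    (hwealth : h (∑ t ∈ Finset.Icc 1 T, c t) ≤ ε + ∑ t ∈ Finset.Icc 1 T, c t * x t)
    (C : ℝ) (hC : ∀ v : ℝ, xstar * v - h v ≤ C) :
    f ((1 / (T : ℝ)) * ∑ t ∈ Finset.Icc 1 T, x t) - f xstar ≤ (C + ε) / (T : ℝ) :=
  coin_betting_regret_one_dim_general f hf xstar ε T hT x g c hsub hc h hwealth C hC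
end

section
/- Let f : ℝ^d → ℝ be convex with a minimizer x*. Let ε > 0 and let x_1, …, x_T ∈ ℝ^d be any sequence of bets. For each t, let g_t be a subgradient of f at x_t with ‖g_t‖ ≤ 1, and set c_t := −g_t. Suppose i : [0,∞) → ℝ is an even-extendable convex increasing function such that the realized wealth satisfies ε + Σ_{t=1}^T ⟨c_t, x_t⟩ ≥ i(‖Σ_{t=1}^T c_t‖). Then f((1/T) Σ_{t=1}^T x_t) − f(x*) ≤ (i*(‖x*‖) + ε)/T, where i* denotes the Fenchel conjugate of the even extension of i to ℝ. -/
/-!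
Subgradient inequalities bound the regret of the bets against `x*` by the linearised regret
`∑ ⟨gₜ, xₜ - x*⟩ = ⟨∑ cₜ, x*⟫ - ∑ ⟨cₜ, xₜ⟩`. By Cauchy–Schwarz and the Fenchel–Young inequality,
`⟨∑ cₜ, x*⟩ ≤ i (‖∑ cₜ‖) + i* (‖x*‖)`, and the wealth guarantee turns `i (‖∑ cₜ‖)` into
`ε + ∑ ⟨cₜ, xₜ⟩`, so the total regret is at most `i* (‖x*‖) + ε`. Jensen's inequality passes
from the total regret to the regret of the averaged bet.
-/

open scoped RealInnerProductSpace

open Finset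

theorem ConvexOn.map_average_sub_le {E ι : Type*} [AddCommGroup E] [Module ℝ E] {f : E → ℝ}
    (hf : ConvexOn ℝ Set.univ f) {s : Finset ι} (hs : s.Nonempty) (x : ι → E) (u : E) :
    f ((1 / (#s : ℝ)) • ∑ t ∈ s, x t) - f u ≤ (∑ t ∈ s, (f (x t) - f u)) / #s := by
  have hcard : (0 : ℝ) < #s := by exact_mod_cast hs.card_pos
  have hjensen : f (∑ t ∈ s, (1 / (#s : ℝ)) • x t) ≤ ∑ t ∈ s, (1 / (#s : ℝ)) • f (x t) :=
    hf.map_sum_le (fun _ _ => by positivity) (by simp [hcard.ne'])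
      (fun _ _ => Set.mem_univ _)
  rw [← smul_sum, ← smul_sum, smul_eq_mul] at hjensen
  rw [sum_sub_distrib, sum_const, nsmul_eq_mul, sub_div, mul_div_cancel_left₀ _ hcard.ne']
  linarith [one_div_mul_eq_div (#s : ℝ) (∑ t ∈ s, f (x t))]

section InnerProductSpace

variable {E ι : Type*} [NormedAddCommGroup E] [InnerProductSpace ℝ E]

theorem sum_sub_le_sum_inner_of_subgradient {f : E → ℝ} {s : Finset ι} {x g : ι → E}
    (hsub : ∀ t ∈ s, ∀ z, ⟪g t, z - x t⟫ ≤ f z - f (x t)) (u : E) :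
    ∑ t ∈ s, (f (x t) - f u) ≤ ∑ t ∈ s, ⟪g t, x t - u⟫ :=
  sum_le_sum fun t ht => by
    have h := hsub t ht u
    rw [← neg_sub, inner_neg_right] at h
    linarith

theorem inner_le_add_of_forall_mul_sub_le {i : ℝ → ℝ} {C : ℝ} {u : E}
    (hC : ∀ v : ℝ, ‖u‖ * v - i v ≤ C) (a : E) : ⟪a, u⟫ ≤ i ‖a‖ + C := by
  have hcs : ⟪a, u⟫ ≤ ‖u‖ * ‖a‖ := (real_inner_le_norm a u).trans_eq (mul_comm _ _)
  linarith [hC ‖a‖]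

theorem sum_inner_sub_le_of_le_wealth {i : ℝ → ℝ} {C ε : ℝ} {s : Finset ι} {c x : ι → E}
    {u : E} (hwealth : i ‖∑ t ∈ s, c t‖ ≤ ε + ∑ t ∈ s, ⟪c t, x t⟫)
    (hC : ∀ v : ℝ, ‖u‖ * v - i v ≤ C) :
    ∑ t ∈ s, ⟪c t, u - x t⟫ ≤ C + ε := by
  have hfy := inner_le_add_of_forall_mul_sub_le hC (∑ t ∈ s, c t)
  simp only [inner_sub_right, sum_sub_distrib, ← sum_inner]
  linarith

end InnerProductSpace

theorem coin_betting_regret_dim_d_general {d : ℕ}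
    (f : EuclideanSpace ℝ (Fin d) → ℝ) (hf : ConvexOn ℝ Set.univ f)
    (xstar : EuclideanSpace ℝ (Fin d))
    (ε : ℝ)
    (T : ℕ) (hT : 1 ≤ T)
    (x g c : ℕ → EuclideanSpace ℝ (Fin d))
    (hsub : ∀ t ∈ Finset.Icc 1 T, ∀ z, ⟪g t, z - x t⟫ ≤ f z - f (x t))
    (hc : ∀ t ∈ Finset.Icc 1 T, c t = -(g t))
    (i : ℝ → ℝ)
    (hwealth : i ‖∑ t ∈ Finset.Icc 1 T, c t‖ ≤ ε + ∑ t ∈ Finset.Icc 1 T, ⟪c t, x t⟫)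
    (C : ℝ) (hC : ∀ v : ℝ, ‖xstar‖ * v - i v ≤ C) :
    f ((1 / (T : ℝ)) • ∑ t ∈ Finset.Icc 1 T, x t) - f xstar ≤ (C + ε) / (T : ℝ) := by
  have hregret : ∑ t ∈ Icc 1 T, (f (x t) - f xstar) ≤ C + ε :=
    calc ∑ t ∈ Icc 1 T, (f (x t) - f xstar)
        ≤ ∑ t ∈ Icc 1 T, ⟪g t, x t - xstar⟫ := sum_sub_le_sum_inner_of_subgradient hsub xstar
      _ = ∑ t ∈ Icc 1 T, ⟪c t, xstar - x t⟫ := sum_congr rfl fun t ht => by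
        rw [hc t ht, inner_neg_left, ← inner_neg_right, neg_sub]
      _ ≤ C + ε := sum_inner_sub_le_of_le_wealth hwealth hC
  calc f ((1 / (T : ℝ)) • ∑ t ∈ Icc 1 T, x t) - f xstar
      ≤ (∑ t ∈ Icc 1 T, (f (x t) - f xstar)) / T := by
        simpa using hf.map_average_sub_le (nonempty_Icc.2 hT) x xstar
    _ ≤ (C + ε) / T := by gcongr

/-- **Coin-betting regret bound, d-dimensional.**
If a betting strategy guarantees wealth `ε + ∑ ⟨cₜ, xₜ⟩ ≥ i (‖∑ cₜ‖)` when the coin outcomes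
are `cₜ = -gₜ` for subgradients `gₜ ∈ ∂f(xₜ)` with `‖gₜ‖ ≤ 1`, where `i : ℝ → ℝ` is an even,
convex function increasing on `[0, ∞)` (the even extension of a function on `[0, ∞)`), then
`f(x̄_T) - f(x*) ≤ (i*(‖x*‖) + ε)/T`, the Fenchel conjugate `i*` being encoded by quantifying
over all upper bounds `C` of `v ↦ ‖x*‖·v - i v`. -/
theorem coin_betting_regret_dim_d {d : ℕ}
    (f : EuclideanSpace ℝ (Fin d) → ℝ) (hf : ConvexOn ℝ Set.univ f)
    (xstar : EuclideanSpace ℝ (Fin d)) (hmin : ∀ y, f xstar ≤ f y)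
    (ε : ℝ) (hε : 0 < ε)
    (T : ℕ) (hT : 1 ≤ T)
    (x g c : ℕ → EuclideanSpace ℝ (Fin d))
    (hsub : ∀ t ∈ Finset.Icc 1 T, ∀ z, ⟪g t, z - x t⟫ ≤ f z - f (x t))
    (hgbound : ∀ t ∈ Finset.Icc 1 T, ‖g t‖ ≤ 1)
    (hc : ∀ t ∈ Finset.Icc 1 T, c t = -(g t))
    (i : ℝ → ℝ)
    (hieven : ∀ u : ℝ, i (-u) = i u)
    (hiconv : ConvexOn ℝ Set.univ i)
    (himono : MonotoneOn i (Set.Ici (0 : ℝ)))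
    (hwealth : i ‖∑ t ∈ Finset.Icc 1 T, c t‖ ≤ ε + ∑ t ∈ Finset.Icc 1 T, ⟪c t, x t⟫)
    (C : ℝ) (hC : ∀ v : ℝ, ‖xstar‖ * v - i v ≤ C) :
    f ((1 / (T : ℝ)) • ∑ t ∈ Finset.Icc 1 T, x t) - f xstar ≤ (C + ε) / (T : ℝ) :=
  coin_betting_regret_dim_d_general f hf xstar ε T hT x g c hsub hc i hwealth C hC
end

section
/- Let f : ℝ^d → ℝ be convex, and suppose every subgradient g of f at every point satisfies ‖g‖ ≤ L. Let γ > 0, let x_1 ∈ ℝ^d, and define iterates x_{t+1} = x_t − γ g_t where g_t is a subgradient of f at x_t. Then for any minimizer x* of f and any T ≥ 1, the average iterate x̄_T = (1/T) Σ_{t=1}^T x_t satisfies f(x̄_T) − f(x*) ≤ (1/T)[‖x_1 − x*‖² / (2γ) + L² T γ / 2]. -/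
/-!
Each step satisfies `f xₜ - f x* ≤ ⟪gₜ, xₜ - x*⟫` and, expanding the square,
`⟪gₜ, xₜ - x*⟫ = (‖xₜ - x*‖² - ‖xₜ₊₁ - x*‖²) / (2γ) + γ‖gₜ‖² / 2`. Summing over `t ≤ T`, the
distance terms telescope, so the total regret is at most `‖x₁ - x*‖² / (2γ) + L²Tγ / 2`,
and Jensen's inequality bounds `f(x̄_T) - f x*` by the average regret.
-/

open scoped RealInnerProductSpace
open Finset

section SubgradientDescent

variable {E : Type*} [NormedAddCommGroup E] [InnerProductSpace ℝ E]

def HasSubgradientAt (f : E → ℝ) (g x : E) : Prop :=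
  ∀ z, ⟪g, z - x⟫ ≤ f z - f x

theorem HasSubgradientAt.sub_le_inner {f : E → ℝ} {g x : E} (hg : HasSubgradientAt f g x)
    (y : E) : f x - f y ≤ ⟪g, x - y⟫ := by
  have h := hg y
  rw [← neg_sub x y, inner_neg_right] at h
  linarith

theorem norm_sub_smul_sub_sq (x y g : E) (γ : ℝ) :
    ‖x - γ • g - y‖ ^ 2 = ‖x - y‖ ^ 2 - 2 * γ * ⟪g, x - y⟫ + γ ^ 2 * ‖g‖ ^ 2 := by
  rw [sub_right_comm, norm_sub_sq_real, real_inner_smul_right, real_inner_comm, norm_smul,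
    Real.norm_eq_abs, mul_pow, sq_abs]
  ring

theorem HasSubgradientAt.sub_le_of_descent_step {f : E → ℝ} {g x : E} {γ : ℝ}
    (hg : HasSubgradientAt f g x) (hγ : 0 < γ) (y : E) :
    f x - f y ≤ (‖x - y‖ ^ 2 - ‖x - γ • g - y‖ ^ 2) / (2 * γ) + γ * ‖g‖ ^ 2 / 2 := by
  have key : (‖x - y‖ ^ 2 - ‖x - γ • g - y‖ ^ 2) / (2 * γ) + γ * ‖g‖ ^ 2 / 2 = ⟪g, x - y⟫ := by
    rw [norm_sub_smul_sub_sq]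
    field_simp
    ring
  exact key ▸ hg.sub_le_inner y

theorem sum_sub_le_of_subgradient_descent {f : E → ℝ} {x g : ℕ → E} {γ L : ℝ} (hγ : 0 < γ)
    (hsub : ∀ t, 1 ≤ t → HasSubgradientAt f (g t) (x t)) (hL : ∀ t, 1 ≤ t → ‖g t‖ ≤ L)
    (hiter : ∀ t, 1 ≤ t → x (t + 1) = x t - γ • g t) (y : E) (T : ℕ) :
    ∑ t ∈ Icc 1 T, (f (x t) - f y) ≤ ‖x 1 - y‖ ^ 2 / (2 * γ) + L ^ 2 * T * γ / 2 := by
  set D : ℕ → ℝ := fun t ↦ ‖x t - y‖ ^ 2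
  have hstep : ∀ t ∈ Icc 1 T, f (x t) - f y ≤ -(D (t + 1) - D t) / (2 * γ) + L ^ 2 * γ / 2 := by
    intro t ht
    have ht : 1 ≤ t := (mem_Icc.mp ht).1
    have hgL : γ * ‖g t‖ ^ 2 ≤ γ * L ^ 2 :=
      mul_le_mul_of_nonneg_left (pow_le_pow_left₀ (norm_nonneg _) (hL t ht) 2) hγ.le
    have := (hsub t ht).sub_le_of_descent_step hγ y
    rw [← hiter t ht] at this
    simp only [D, neg_sub]
    linarith
  have htelescope : ∑ t ∈ Icc 1 T, (D (t + 1) - D t) = D (T + 1) - D 1 := by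
    rw [← Ico_add_one_right_eq_Icc, sum_Ico_sub D (by omega)]
  calc ∑ t ∈ Icc 1 T, (f (x t) - f y)
      ≤ ∑ t ∈ Icc 1 T, (-(D (t + 1) - D t) / (2 * γ) + L ^ 2 * γ / 2) := sum_le_sum hstep
    _ = (D 1 - D (T + 1)) / (2 * γ) + L ^ 2 * T * γ / 2 := by
      rw [sum_add_distrib, ← sum_div, sum_neg_distrib, htelescope, sum_const, Nat.card_Icc,
        nsmul_eq_mul]
      push_cast
      ring
    _ ≤ D 1 / (2 * γ) + L ^ 2 * T * γ / 2 := by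
      gcongr
      exact sub_le_self _ (sq_nonneg _)

end SubgradientDescent

theorem ConvexOn.map_mean_le_s2 {E ι : Type*} [AddCommGroup E] [Module ℝ E] {s : Set E}
    {f : E → ℝ} (hf : ConvexOn ℝ s f) {t : Finset ι} (ht : t.Nonempty) {p : ι → E}
    (hp : ∀ i ∈ t, p i ∈ s) :
    f ((1 / (#t : ℝ)) • ∑ i ∈ t, p i) ≤ (1 / (#t : ℝ)) * ∑ i ∈ t, f (p i) := by
  have hcard : (#t : ℝ) ≠ 0 := by exact_mod_cast ht.card_ne_zero
  have := hf.map_sum_le (w := fun _ ↦ 1 / (#t : ℝ)) (fun _ _ ↦ by positivity)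
    (by rw [sum_const, nsmul_eq_mul]; field_simp) hp
  simpa only [smul_eq_mul, ← mul_sum, ← smul_sum] using this

theorem subgradient_descent_bound_general {d : ℕ}
    (f : EuclideanSpace ℝ (Fin d) → ℝ) (hf : ConvexOn ℝ Set.univ f)
    (L : ℝ)
    (hL : ∀ x g : EuclideanSpace ℝ (Fin d),
      (∀ z, ⟪g, z - x⟫ ≤ f z - f x) → ‖g‖ ≤ L)
    (γ : ℝ) (hγ : 0 < γ)
    (x g : ℕ → EuclideanSpace ℝ (Fin d))
    (hsub : ∀ t, 1 ≤ t → ∀ z, ⟪g t, z - x t⟫ ≤ f z - f (x t))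
    (hiter : ∀ t, 1 ≤ t → x (t + 1) = x t - γ • g t)
    (xstar : EuclideanSpace ℝ (Fin d))
    (T : ℕ) (hT : 1 ≤ T) :
    f ((1 / (T : ℝ)) • ∑ t ∈ Finset.Icc 1 T, x t) - f xstar ≤
      (1 / (T : ℝ)) * (‖x 1 - xstar‖ ^ 2 / (2 * γ) + L ^ 2 * T * γ / 2) := by
  have hcard : #(Icc 1 T) = T := by simp
  have hjensen := hf.map_mean_le_s2 (nonempty_Icc.mpr hT) (p := x) fun _ _ ↦ Set.mem_univ _
  have hregret := sum_sub_le_of_subgradient_descent hγ hsub (fun t ht ↦ hL _ _ (hsub t ht))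
    hiter xstar T
  rw [hcard] at hjensen
  calc f ((1 / (T : ℝ)) • ∑ t ∈ Icc 1 T, x t) - f xstar
      ≤ (1 / (T : ℝ)) * ∑ t ∈ Icc 1 T, (f (x t) - f xstar) := by
        rw [sum_sub_distrib, sum_const, hcard, nsmul_eq_mul, mul_sub]
        field_simp at hjensen ⊢
        linarith
    _ ≤ _ := by gcongr

/-- **Subgradient descent bound (eq. (7) of the paper).**
For convex `f : ℝ^d → ℝ` whose subgradients are all bounded in norm by `L`, the iterates
`x_{t+1} = x_t - γ gₜ`, `gₜ ∈ ∂f(xₜ)`, satisfy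
`f(x̄_T) - f(x*) ≤ (1/T)[‖x₁ - x*‖²/(2γ) + L²Tγ/2]`. -/
theorem subgradient_descent_bound {d : ℕ}
    (f : EuclideanSpace ℝ (Fin d) → ℝ) (hf : ConvexOn ℝ Set.univ f)
    (L : ℝ)
    (hL : ∀ x g : EuclideanSpace ℝ (Fin d),
      (∀ z, ⟪g, z - x⟫ ≤ f z - f x) → ‖g‖ ≤ L)
    (γ : ℝ) (hγ : 0 < γ)
    (x g : ℕ → EuclideanSpace ℝ (Fin d))
    (hsub : ∀ t, 1 ≤ t → ∀ z, ⟪g t, z - x t⟫ ≤ f z - f (x t))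
    (hiter : ∀ t, 1 ≤ t → x (t + 1) = x t - γ • g t)
    (xstar : EuclideanSpace ℝ (Fin d)) (hmin : ∀ y, f xstar ≤ f y)
    (T : ℕ) (hT : 1 ≤ T) :
    f ((1 / (T : ℝ)) • ∑ t ∈ Finset.Icc 1 T, x t) - f xstar ≤
      (1 / (T : ℝ)) * (‖x 1 - xstar‖ ^ 2 / (2 * γ) + L ^ 2 * T * γ / 2) :=
  subgradient_descent_bound_general f hf L hL γ hγ x g hsub hiter xstar T hT
end

section
/- Let ε > 0, T ≥ 1, and let c_1, …, c_T ∈ [−1, 1] be an arbitrary sequence of coin outcomes. Define the Krichevsky–Trofimov (KT) bets recursively by x_t = (Σ_{i=1}^{t−1} c_i / t) · (ε + Σ_{i=1}^{t−1} c_i x_i). Then the final wealth satisfies ε + Σ_{t=1}^T c_t x_t ≥ ε · 2^T · Γ((T+1)/2 + u/2) · Γ((T+1)/2 − u/2) / (Γ(1/2)² · Γ(T+1)), where u = Σ_{t=1}^T c_t and Γ is the Gamma function. -/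
/-!
The KT potential `F n u = 2^n Γ((n+1+u)/2) Γ((n+1-u)/2) / (Γ(1/2)² Γ(n+1))` satisfies `F 0 0 = 1`
and, by `Γ(s+1) = s Γ(s)`, `F (n+1) (u ± 1) = F n u (1 ± u/(n+1))`. Log-convexity of `Γ` makes
`F (n+1)` convex, so writing `u + c` as the combination of `u ± 1` with weights `(1 ± c)/2` gives
`F (n+1) (u + c) ≤ F n u (1 + c u/(n+1))`. The KT bet multiplies the wealth by exactly the
nonnegative factor `1 + c u/(n+1)`, where `u` is the sum of the past outcomes, so `ε F n (∑ c)`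
stays below the wealth by induction.
-/

open Real Finset

theorem ConvexOn.of_convexOn_log_comp {E : Type*} [AddCommGroup E] [Module ℝ E] {s : Set E}
    {f : E → ℝ} (hf : ∀ x ∈ s, 0 < f x) (h : ConvexOn ℝ s (log ∘ f)) : ConvexOn ℝ s f := by
  refine ⟨h.1, fun x hx y hy a b ha hb hab => ?_⟩
  calc f (a • x + b • y) = exp (log (f (a • x + b • y))) :=
        (exp_log (hf _ (h.1 hx hy ha hb hab))).symm
    _ ≤ exp (a • log (f x) + b • log (f y)) := exp_le_exp.mpr (h.2 hx hy ha hb hab)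
    _ ≤ a • exp (log (f x)) + b • exp (log (f y)) :=
        convexOn_exp.2 (Set.mem_univ _) (Set.mem_univ _) ha hb hab
    _ = a • f x + b • f y := by rw [exp_log (hf x hx), exp_log (hf y hy)]

theorem convexOn_log_Gamma_add_add_log_Gamma_sub (a : ℝ) :
    ConvexOn ℝ (Set.Ioo (-a) a) fun v => log (Gamma (a + v)) + log (Gamma (a - v)) := by
  refine ⟨convex_Ioo _ _, fun x hx y hy p q hp hq hpq => ?_⟩
  obtain ⟨hx₁, hx₂⟩ := hx
  obtain ⟨hy₁, hy₂⟩ := hy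
  have hadd := convexOn_log_Gamma.2 (x := a + x) (y := a + y)
    (by simp only [Set.mem_Ioi]; linarith) (by simp only [Set.mem_Ioi]; linarith) hp hq hpq
  have hsub := convexOn_log_Gamma.2 (x := a - x) (y := a - y)
    (by simp only [Set.mem_Ioi]; linarith) (by simp only [Set.mem_Ioi]; linarith) hp hq hpq
  have eadd : p * (a + x) + q * (a + y) = a + (p * x + q * y) := by linear_combination a * hpq
  have esub : p * (a - x) + q * (a - y) = a - (p * x + q * y) := by linear_combination a * hpq
  simp only [Function.comp_apply, smul_eq_mul] at hadd hsub ⊢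
  rw [eadd] at hadd
  rw [esub] at hsub
  linarith

theorem convexOn_Gamma_add_mul_Gamma_sub (a : ℝ) :
    ConvexOn ℝ (Set.Ioo (-a) a) fun v => Gamma (a + v) * Gamma (a - v) := by
  have hpos : ∀ v ∈ Set.Ioo (-a) a, 0 < Gamma (a + v) ∧ 0 < Gamma (a - v) := fun v ⟨h₁, h₂⟩ =>
    ⟨Gamma_pos_of_pos (by linarith), Gamma_pos_of_pos (by linarith)⟩
  refine .of_convexOn_log_comp (fun v hv => mul_pos (hpos v hv).1 (hpos v hv).2) ?_
  refine (convexOn_log_Gamma_add_add_log_Gamma_sub a).congr fun v hv => ?_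
  exact (log_mul (hpos v hv).1.ne' (hpos v hv).2.ne').symm

noncomputable def ktPotential (n : ℕ) (u : ℝ) : ℝ :=
  2 ^ n * Gamma (((n : ℝ) + 1) / 2 + u / 2) * Gamma (((n : ℝ) + 1) / 2 - u / 2) /
    (Gamma (1 / 2) ^ 2 * Gamma ((n : ℝ) + 1))

theorem ktPotential_zero_zero : ktPotential 0 0 = 1 := by
  have : Gamma 2⁻¹ ≠ 0 := (Gamma_pos_of_pos (by norm_num)).ne'
  simp [ktPotential]
  field_simp

theorem ktPotential_neg (n : ℕ) (u : ℝ) : ktPotential n (-u) = ktPotential n u := by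
  simp only [ktPotential, neg_div, sub_neg_eq_add, ← sub_eq_add_neg]
  ring

theorem ktPotential_succ_add_one (n : ℕ) {u : ℝ} (hu : -((n : ℝ) + 1) < u) :
    ktPotential (n + 1) (u + 1) = ktPotential n u * (1 + u / ((n : ℝ) + 1)) := by
  have hpos : 0 < ((n : ℝ) + 1) / 2 + u / 2 := by linarith
  have hΓ : Gamma (1 / 2) ≠ 0 := (Gamma_pos_of_pos one_half_pos).ne'
  have hΓn : Gamma ((n : ℝ) + 1) ≠ 0 := (Gamma_pos_of_pos (by positivity)).ne'
  have eadd : ((n + 1 : ℕ) + 1 : ℝ) / 2 + (u + 1) / 2 = ((n : ℝ) + 1) / 2 + u / 2 + 1 := by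
    push_cast; ring
  have esub : ((n + 1 : ℕ) + 1 : ℝ) / 2 - (u + 1) / 2 = ((n : ℝ) + 1) / 2 - u / 2 := by
    push_cast; ring
  have e : ((n + 1 : ℕ) : ℝ) + 1 = (n : ℝ) + 1 + 1 := by push_cast; ring
  rw [ktPotential, ktPotential, eadd, esub, e, Gamma_add_one hpos.ne', Gamma_add_one (by positivity),
    pow_succ]
  field_simp

theorem ktPotential_succ_sub_one (n : ℕ) {u : ℝ} (hu : u < (n : ℝ) + 1) :
    ktPotential (n + 1) (u - 1) = ktPotential n u * (1 - u / ((n : ℝ) + 1)) := by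
  rw [← ktPotential_neg, neg_sub, sub_eq_neg_add, ktPotential_succ_add_one n (by linarith),
    ktPotential_neg, neg_div, sub_eq_add_neg]

theorem convexOn_ktPotential (n : ℕ) :
    ConvexOn ℝ (Set.Ioo (-((n : ℝ) + 1)) ((n : ℝ) + 1)) (ktPotential n) := by
  refine ⟨convex_Ioo _ _, fun x hx y hy p q hp hq hpq => ?_⟩
  obtain ⟨hx₁, hx₂⟩ := hx
  obtain ⟨hy₁, hy₂⟩ := hy
  have hK : 0 ≤ 2 ^ n / (Gamma (1 / 2) ^ 2 * Gamma ((n : ℝ) + 1)) := by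
    have := Gamma_pos_of_pos (s := (n : ℝ) + 1) (by positivity)
    positivity
  have h := (convexOn_Gamma_add_mul_Gamma_sub (((n : ℝ) + 1) / 2)).2 (x := x / 2) (y := y / 2)
    ⟨by linarith, by linarith⟩ ⟨by linarith, by linarith⟩ hp hq hpq
  simp only [smul_eq_mul] at h ⊢
  calc ktPotential n (p * x + q * y)
      = 2 ^ n / (Gamma (1 / 2) ^ 2 * Gamma ((n : ℝ) + 1)) *
          (Gamma (((n : ℝ) + 1) / 2 + (p * (x / 2) + q * (y / 2))) *
            Gamma (((n : ℝ) + 1) / 2 - (p * (x / 2) + q * (y / 2)))) := by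
        rw [ktPotential, show (p * x + q * y) / 2 = p * (x / 2) + q * (y / 2) by ring]
        ring
    _ ≤ _ := mul_le_mul_of_nonneg_left h hK
    _ = p * ktPotential n x + q * ktPotential n y := by simp only [ktPotential]; ring

theorem ktPotential_succ_add_le (n : ℕ) {u c : ℝ} (hu : |u| ≤ n) (hc : |c| ≤ 1) :
    ktPotential (n + 1) (u + c) ≤ ktPotential n u * (1 + c * u / ((n : ℝ) + 1)) := by
  obtain ⟨hu₁, hu₂⟩ := abs_le.mp hu
  obtain ⟨hc₁, hc₂⟩ := abs_le.mp hc
  have hmem : ∀ v, |v - u| ≤ 1 → v ∈ Set.Ioo (-(((n + 1 : ℕ) : ℝ) + 1)) (((n + 1 : ℕ) : ℝ) + 1) :=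
    fun v hv => by obtain ⟨_, _⟩ := abs_le.mp hv; push_cast; constructor <;> linarith
  have hconv := (convexOn_ktPotential (n + 1)).2 (hmem (u + 1) (by simp)) (hmem (u - 1) (by simp))
    (show 0 ≤ (1 + c) / 2 by linarith) (show 0 ≤ (1 - c) / 2 by linarith) (by ring)
  rw [ktPotential_succ_add_one n (by linarith), ktPotential_succ_sub_one n (by linarith),
    smul_eq_mul, smul_eq_mul, smul_eq_mul, smul_eq_mul] at hconv
  calc ktPotential (n + 1) (u + c)
      = ktPotential (n + 1) ((1 + c) / 2 * (u + 1) + (1 - c) / 2 * (u - 1)) := by ring_nf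
    _ ≤ _ := hconv
    _ = ktPotential n u * (1 + c * u / ((n : ℝ) + 1)) := by ring

theorem abs_sum_Icc_le_of_abs_le_one (c : ℕ → ℝ) (n : ℕ) (hc : ∀ t ∈ Icc 1 n, |c t| ≤ 1) :
    |∑ t ∈ Icc 1 n, c t| ≤ n := by
  calc |∑ t ∈ Icc 1 n, c t| ≤ ∑ t ∈ Icc 1 n, |c t| := abs_sum_le_sum_abs _ _
    _ ≤ #(Icc 1 n) • (1 : ℝ) := sum_le_card_nsmul _ _ _ hc
    _ = n := by simp

theorem kt_wealth_succ (ε : ℝ) (c x : ℕ → ℝ) (n : ℕ)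
    (hx : x (n + 1) = (∑ i ∈ Icc 1 n, c i) / ((n : ℝ) + 1) * (ε + ∑ i ∈ Icc 1 n, c i * x i)) :
    ε + ∑ t ∈ Icc 1 (n + 1), c t * x t =
      (ε + ∑ t ∈ Icc 1 n, c t * x t) * (1 + c (n + 1) * (∑ t ∈ Icc 1 n, c t) / ((n : ℝ) + 1)) := by
  rw [sum_Icc_succ_top (by omega), hx]
  ring

theorem mul_ktPotential_le_kt_wealth {ε : ℝ} (hε : 0 ≤ ε) (c x : ℕ → ℝ) (n : ℕ)
    (hc : ∀ t ∈ Icc 1 n, |c t| ≤ 1)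
    (hx : ∀ t ∈ Icc 1 n,
      x t = ((∑ i ∈ Icc 1 (t - 1), c i) / (t : ℝ)) * (ε + ∑ i ∈ Icc 1 (t - 1), c i * x i)) :
    ε * ktPotential n (∑ t ∈ Icc 1 n, c t) ≤ ε + ∑ t ∈ Icc 1 n, c t * x t := by
  induction n with
  | zero => simp [ktPotential_zero_zero]
  | succ n ih =>
    have hsub : Icc 1 n ⊆ Icc 1 (n + 1) := Icc_subset_Icc_right n.le_succ
    have hlast : n + 1 ∈ Icc 1 (n + 1) := by simp
    set u := ∑ t ∈ Icc 1 n, c t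
    have hu : |u| ≤ n := abs_sum_Icc_le_of_abs_le_one c n fun t ht => hc t (hsub ht)
    have hcn : |c (n + 1)| ≤ 1 := hc _ hlast
    have hfactor : 0 ≤ 1 + c (n + 1) * u / ((n : ℝ) + 1) := by
      have : |c (n + 1) * u / ((n : ℝ) + 1)| ≤ 1 := by
        rw [abs_div, abs_mul, abs_of_pos (by positivity : (0 : ℝ) < n + 1),
          div_le_one (by positivity)]
        nlinarith [abs_nonneg (c (n + 1))]
      linarith [neg_abs_le (c (n + 1) * u / ((n : ℝ) + 1))]
    rw [kt_wealth_succ ε c x n (by simpa using hx _ hlast), sum_Icc_succ_top (by omega)]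
    calc ε * ktPotential (n + 1) (u + c (n + 1))
        ≤ ε * ktPotential n u * (1 + c (n + 1) * u / ((n : ℝ) + 1)) := by
          rw [mul_assoc]
          exact mul_le_mul_of_nonneg_left (ktPotential_succ_add_le n hu hcn) hε
      _ ≤ _ := mul_le_mul_of_nonneg_right
          (ih (fun t ht => hc t (hsub ht)) (fun t ht => hx t (hsub ht))) hfactor

theorem kt_wealth_gamma_lower_bound_general
    (ε : ℝ) (hε : 0 < ε)
    (T : ℕ)
    (c x : ℕ → ℝ)
    (hc : ∀ t ∈ Finset.Icc 1 T, c t ∈ Set.Icc (-1 : ℝ) 1)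
    (hx : ∀ t ∈ Finset.Icc 1 T,
      x t = ((∑ i ∈ Finset.Icc 1 (t - 1), c i) / (t : ℝ)) *
              (ε + ∑ i ∈ Finset.Icc 1 (t - 1), c i * x i)) :
    ε * 2 ^ T *
        Real.Gamma (((T : ℝ) + 1) / 2 + (∑ t ∈ Finset.Icc 1 T, c t) / 2) *
        Real.Gamma (((T : ℝ) + 1) / 2 - (∑ t ∈ Finset.Icc 1 T, c t) / 2) /
        (Real.Gamma (1 / 2) ^ 2 * Real.Gamma ((T : ℝ) + 1)) ≤
      ε + ∑ t ∈ Finset.Icc 1 T, c t * x t := by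
  have h := mul_ktPotential_le_kt_wealth hε.le c x T (fun t ht => abs_le.mpr (hc t ht)) hx
  convert h using 1
  rw [ktPotential]
  ring

/-- **KT wealth lower bound (eq. (14) of the paper / Orabona & Pál).**
For any coin outcomes `cₜ ∈ [-1,1]`, the Krichevsky–Trofimov bets
`xₜ = (∑_{i<t} cᵢ / t)(ε + ∑_{i<t} cᵢ xᵢ)` guarantee the final wealth
`ε + ∑_{t=1}^T cₜ xₜ ≥ ε 2^T Γ((T+1)/2 + u/2) Γ((T+1)/2 - u/2) / (Γ(1/2)² Γ(T+1))`,
where `u = ∑_{t=1}^T cₜ`. -/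
theorem kt_wealth_gamma_lower_bound
    (ε : ℝ) (hε : 0 < ε)
    (T : ℕ) (hT : 1 ≤ T)
    (c x : ℕ → ℝ)
    (hc : ∀ t ∈ Finset.Icc 1 T, c t ∈ Set.Icc (-1 : ℝ) 1)
    (hx : ∀ t ∈ Finset.Icc 1 T,
      x t = ((∑ i ∈ Finset.Icc 1 (t - 1), c i) / (t : ℝ)) *
              (ε + ∑ i ∈ Finset.Icc 1 (t - 1), c i * x i)) :
    ε * 2 ^ T *
        Real.Gamma (((T : ℝ) + 1) / 2 + (∑ t ∈ Finset.Icc 1 T, c t) / 2) *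
        Real.Gamma (((T : ℝ) + 1) / 2 - (∑ t ∈ Finset.Icc 1 T, c t) / 2) /
        (Real.Gamma (1 / 2) ^ 2 * Real.Gamma ((T : ℝ) + 1)) ≤
      ε + ∑ t ∈ Finset.Icc 1 T, c t * x t :=
  kt_wealth_gamma_lower_bound_general ε hε T c x hc hx
end

section
/- Let T ≥ 1 be a natural number and let u ∈ ℝ with |u| ≤ T. Then 2^T · Γ((T+1)/2 + u/2) · Γ((T+1)/2 − u/2) / (Γ(1/2)² · Γ(T+1)) ≥ (1 / (e √π √T)) · exp(u² / (2T)), where Γ is the Gamma function and e is Euler's number. -/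
open Real Filter Finset
open scoped Nat

/-!
Euler's limit formula writes `Γ(s+x)Γ(s-x)/Γ(s)²` as the product over `j ≥ 0` of
`(s+j)²/((s+j)²-x²) ≥ exp (x²/(s+j)²) ≥ exp (x²/(s+j) - x²/(s+j+1))`, which telescopes to
`Γ(s+x)Γ(s-x) ≥ Γ(s)² exp (x²/s)`. Take `s = (T+1)/2`, `x = u/2`: Legendre's duplication formula
gives `Γ(T+1) = 2^T Γ(s)Γ(s+1/2)/√π`, log-convexity gives `Γ(s+1/2) ≤ √s Γ(s) ≤ √T Γ(s)`, and
`x²/s = u²/(2(T+1)) ≥ u²/(2T) - 1` because `|u| ≤ T`.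
-/

namespace Real

lemma sq_sub_sq_mul_exp_div_le {x y : ℝ} (hy : 0 < y) :
    (y + x) * (y - x) * exp (x ^ 2 / y) ≤ y ^ 2 * exp (x ^ 2 / (y + 1)) := by
  have h_mul : (y + x) * (y - x) ≤ y ^ 2 * exp (-(x ^ 2 / y ^ 2)) := by
    calc (y + x) * (y - x) = y ^ 2 * (-(x ^ 2 / y ^ 2) + 1) := by field_simp; ring
      _ ≤ y ^ 2 * exp (-(x ^ 2 / y ^ 2)) := by gcongr; exact add_one_le_exp _
  have h_exp : -(x ^ 2 / y ^ 2) + x ^ 2 / y ≤ x ^ 2 / (y + 1) := by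
    have h_tel : x ^ 2 / y - x ^ 2 / (y + 1) = x ^ 2 / (y * (y + 1)) := by field_simp; ring
    have : x ^ 2 / (y * (y + 1)) ≤ x ^ 2 / y ^ 2 := by gcongr; nlinarith
    linarith
  calc (y + x) * (y - x) * exp (x ^ 2 / y)
      ≤ y ^ 2 * exp (-(x ^ 2 / y ^ 2)) * exp (x ^ 2 / y) := by gcongr
    _ = y ^ 2 * exp (-(x ^ 2 / y ^ 2) + x ^ 2 / y) := by rw [mul_assoc, ← exp_add]
    _ ≤ y ^ 2 * exp (x ^ 2 / (y + 1)) := by gcongr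

lemma prod_sq_sub_sq_mul_exp_le {s x : ℝ} (hs : 0 < s) (hx : |x| ≤ s) (m : ℕ) :
    (∏ j ∈ range m, (s + x + j) * (s - x + j)) * exp (x ^ 2 / s) ≤
      (∏ j ∈ range m, (s + j)) ^ 2 * exp (x ^ 2 / (s + m)) := by
  induction m with
  | zero => simp
  | succ m ih =>
    obtain ⟨hx₁, hx₂⟩ := abs_le.mp hx
    have hm : (0 : ℝ) ≤ m := m.cast_nonneg
    have h_factor : 0 ≤ (s + x + m) * (s - x + m) := by nlinarith
    rw [prod_range_succ, prod_range_succ]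
    calc (∏ j ∈ range m, (s + x + j) * (s - x + j)) * ((s + x + m) * (s - x + m)) * exp (x ^ 2 / s)
        = (∏ j ∈ range m, (s + x + j) * (s - x + j)) * exp (x ^ 2 / s) *
            ((s + x + m) * (s - x + m)) := by ring
      _ ≤ (∏ j ∈ range m, (s + j)) ^ 2 * exp (x ^ 2 / (s + m)) * ((s + x + m) * (s - x + m)) := by
          gcongr
      _ = (∏ j ∈ range m, (s + j)) ^ 2 * ((s + m + x) * (s + m - x) * exp (x ^ 2 / (s + m))) := by
          ring
      _ ≤ (∏ j ∈ range m, (s + j)) ^ 2 * ((s + m) ^ 2 * exp (x ^ 2 / (s + m + 1))) := by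
          gcongr ?_ * ?_
          exact sq_sub_sq_mul_exp_div_le (by positivity)
      _ = ((∏ j ∈ range m, (s + j)) * (s + m)) ^ 2 * exp (x ^ 2 / (s + ↑(m + 1))) := by
          push_cast [← add_assoc]; ring

lemma GammaSeq_sq_mul_exp_le {s x : ℝ} (hx : |x| < s) (n : ℕ) :
    GammaSeq s n ^ 2 * exp (x ^ 2 / s) ≤
      GammaSeq (s + x) n * GammaSeq (s - x) n * exp (x ^ 2 / (s + n + 1)) := by
  have hs : 0 < s := (abs_nonneg x).trans_lt hx
  obtain ⟨hx₁, hx₂⟩ := abs_lt.mp hx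
  have h_pos : ∀ a : ℝ, 0 < a → 0 < ∏ j ∈ range (n + 1), (a + j) := fun a ha =>
    prod_pos fun j _ => by positivity
  have h_rpow : (n : ℝ) ^ (s + x) * (n : ℝ) ^ (s - x) = ((n : ℝ) ^ s) ^ 2 := by
    rw [← rpow_add' n.cast_nonneg (by linarith), sq, ← rpow_add' n.cast_nonneg (by linarith)]
    ring_nf
  have h_prod := prod_sq_sub_sq_mul_exp_le hs hx.le (n + 1)
  rw [prod_mul_distrib] at h_prod
  push_cast [← add_assoc] at h_prod
  simp only [GammaSeq]
  rw [div_pow, div_mul_div_comm, div_mul_eq_mul_div, div_mul_eq_mul_div,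
    div_le_div_iff₀ (pow_pos (h_pos s hs) 2) (mul_pos (h_pos _ (by linarith)) (h_pos _ (by linarith)))]
  calc (n ^ s * n ! : ℝ) ^ 2 * exp (x ^ 2 / s) *
        ((∏ j ∈ range (n + 1), (s + x + j)) * ∏ j ∈ range (n + 1), (s - x + j))
      = (n ^ s * n ! : ℝ) ^ 2 * (((∏ j ∈ range (n + 1), (s + x + j)) *
          ∏ j ∈ range (n + 1), (s - x + j)) * exp (x ^ 2 / s)) := by ring
    _ ≤ (n ^ s * n ! : ℝ) ^ 2 *
          ((∏ j ∈ range (n + 1), (s + j)) ^ 2 * exp (x ^ 2 / (s + n + 1))) := by gcongr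
    _ = _ := by rw [mul_pow, ← h_rpow]; ring

theorem Gamma_sq_mul_exp_le_Gamma_mul_Gamma {s x : ℝ} (hx : |x| < s) :
    Gamma s ^ 2 * exp (x ^ 2 / s) ≤ Gamma (s + x) * Gamma (s - x) := by
  have h_zero : Tendsto (fun n : ℕ => x ^ 2 / (s + n + 1)) atTop (nhds 0) :=
    tendsto_const_nhds.div_atTop <| tendsto_atTop_add_const_right _ _ <|
      tendsto_atTop_add_const_left _ _ tendsto_natCast_atTop_atTop
  have h_lim := ((GammaSeq_tendsto_Gamma (s + x)).mul (GammaSeq_tendsto_Gamma (s - x))).mul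
    ((continuous_exp.tendsto 0).comp h_zero)
  rw [exp_zero, mul_one] at h_lim
  exact le_of_tendsto_of_tendsto' (((GammaSeq_tendsto_Gamma s).pow 2).mul_const _) h_lim
    fun n => GammaSeq_sq_mul_exp_le hx n

theorem Gamma_add_half_le_sqrt_mul_Gamma {s : ℝ} (hs : 0 < s) :
    Gamma (s + 1 / 2) ≤ √s * Gamma s := by
  have h := Gamma_mul_add_mul_le_rpow_Gamma_mul_rpow_Gamma hs (hs.trans (lt_add_one s))
    one_half_pos one_half_pos (add_halves 1)
  have hΓ := (Gamma_pos_of_pos hs).le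
  rwa [show 1 / 2 * s + 1 / 2 * (s + 1) = s + 1 / 2 by ring, Gamma_add_one hs.ne',
    ← mul_rpow hΓ (by positivity), ← sqrt_eq_rpow,
    show Gamma s * (s * Gamma s) = s * Gamma s ^ 2 by ring, sqrt_mul hs.le, sqrt_sq hΓ] at h

theorem exp_div_sqrt_le_Gamma_mul_Gamma_div {s x : ℝ} (hx : |x| < s) :
    exp (x ^ 2 / s) / √s ≤ Gamma (s + x) * Gamma (s - x) / (Gamma s * Gamma (s + 1 / 2)) := by
  obtain ⟨hx₁, hx₂⟩ := abs_lt.mp hx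
  have hs : 0 < s := by linarith
  have hΓ := Gamma_pos_of_pos hs
  have hΓ_add := Gamma_pos_of_pos (by linarith : 0 < s + x)
  have hΓ_sub := Gamma_pos_of_pos (by linarith : 0 < s - x)
  have hΓ_half := Gamma_pos_of_pos (by positivity : 0 < s + 1 / 2)
  calc exp (x ^ 2 / s) / √s = Gamma s ^ 2 * exp (x ^ 2 / s) / (Gamma s * (√s * Gamma s)) := by
        field_simp
    _ ≤ Gamma (s + x) * Gamma (s - x) / (Gamma s * Gamma (s + 1 / 2)) := by
        refine div_le_div₀ (by positivity) (Gamma_sq_mul_exp_le_Gamma_mul_Gamma hx) (by positivity) ?_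
        gcongr
        exact Gamma_add_half_le_sqrt_mul_Gamma hs

end Real

/-- **Gamma-function lower bound (Lemma 16 of Orabona & Pál / eq. (15) of the paper).**
For `T ≥ 1` and `|u| ≤ T`,
`2^T Γ((T+1)/2 + u/2) Γ((T+1)/2 - u/2) / (Γ(1/2)² Γ(T+1)) ≥ exp(u²/(2T)) / (e √π √T)`. -/
theorem gamma_kt_lower_bound
    (T : ℕ) (hT : 1 ≤ T) (u : ℝ) (hu : |u| ≤ (T : ℝ)) :
    (1 / (Real.exp 1 * Real.sqrt Real.pi * Real.sqrt T)) * Real.exp (u ^ 2 / (2 * T)) ≤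
      2 ^ T * Real.Gamma (((T : ℝ) + 1) / 2 + u / 2) *
        Real.Gamma (((T : ℝ) + 1) / 2 - u / 2) /
        (Real.Gamma (1 / 2) ^ 2 * Real.Gamma ((T : ℝ) + 1)) := by
  have hT' : (1 : ℝ) ≤ T := by exact_mod_cast hT
  set s : ℝ := ((T : ℝ) + 1) / 2 with hs_def
  have hs : 0 < s := by positivity
  have hx : |u / 2| < s := by rw [abs_div, abs_two]; linarith
  have h_exp : u ^ 2 / (2 * T) - 1 ≤ (u / 2) ^ 2 / s := by
    have h_sq : u ^ 2 ≤ (T : ℝ) ^ 2 := sq_le_sq' (abs_le.mp hu).1 (abs_le.mp hu).2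
    rw [hs_def, div_sub_one (by positivity), div_le_div_iff₀ (by positivity) (by positivity)]
    nlinarith
  have h_dup : Gamma (T + 1) * √π = Gamma s * Gamma (s + 1 / 2) * 2 ^ T := by
    rw [Gamma_mul_Gamma_add_half, show 2 * s = T + 1 by ring, show 1 - ((T : ℝ) + 1) = -T by ring,
      rpow_neg zero_le_two, rpow_natCast]
    field_simp
  calc 1 / (exp 1 * √π * √T) * exp (u ^ 2 / (2 * T))
      = exp (u ^ 2 / (2 * T) - 1) / √T / √π := by rw [exp_sub]; field_simp
    _ ≤ exp ((u / 2) ^ 2 / s) / √s / √π := by gcongr; linarith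
    _ ≤ Gamma (s + u / 2) * Gamma (s - u / 2) / (Gamma s * Gamma (s + 1 / 2)) / √π :=
        div_le_div_of_nonneg_right (exp_div_sqrt_le_Gamma_mul_Gamma_div hx) (sqrt_nonneg π)
    _ = _ := by
        rw [Gamma_one_half_eq, eq_div_of_mul_eq (by positivity) h_dup]
        field_simp
end

section
/- Let T ≥ 1 be a natural number and w₀ > 0, and define i : ℝ → ℝ by i(x) = (w₀ / (e √π √T)) · exp(x² / (2T)). Then for every u ∈ ℝ, the Fenchel conjugate of i satisfies i*(u) = sup_{x ∈ ℝ} (u·x − i(x)) ≤ |u| · √(T · ln(1 + 24 T² u² / w₀²)) − w₀ / (e √π √T). -/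
/-!
Writing `c = w₀ / (e √π √T)`, the function `x ↦ u x - c exp (x² / (2T))` is compared with its
value at `A = √(T L)`, `L = log (1 + 24 T² u² / w₀²)`. For `|x| ≤ A` the bound is immediate since
`exp ≥ 1`. Beyond `A` the convex function `c exp (x² / (2T))` lies above its tangent at `A`, whose
slope `c A exp (L / 2) / T` dominates `|u|`: squared, this is `(1 + z) log (1 + z) ≥ z` for
`z = 24 T² u² / w₀²` together with `e² π ≤ 24`.
-/

open Real

lemma exp_sq_div_two_mul_tangent_le {T : ℝ} (hT : 0 < T) (s t : ℝ) :
    exp (s ^ 2 / (2 * T)) * (1 + s * (t - s) / T) ≤ exp (t ^ 2 / (2 * T)) := by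
  have hchord : s * (t - s) / T ≤ (t ^ 2 - s ^ 2) / (2 * T) := by
    rw [div_le_div_iff₀ hT (by positivity)]
    nlinarith [sq_nonneg (t - s)]
  calc exp (s ^ 2 / (2 * T)) * (1 + s * (t - s) / T)
      ≤ exp (s ^ 2 / (2 * T)) * exp ((t ^ 2 - s ^ 2) / (2 * T)) := by
        gcongr
        linarith [add_one_le_exp ((t ^ 2 - s ^ 2) / (2 * T))]
    _ = exp (t ^ 2 / (2 * T)) := by rw [← exp_add]; ring_nf

lemma mul_sub_mul_exp_sq_div_le {T a c A : ℝ} (hT : 0 < T) (ha : 0 ≤ a) (hc : 0 ≤ c)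
    (hA : 0 ≤ A) (hslope : (a * T) ^ 2 ≤ c ^ 2 * A ^ 2 * exp (A ^ 2 / T)) (x : ℝ) :
    a * x - c * exp (x ^ 2 / (2 * T)) ≤ a * A - c := by
  rcases le_or_gt x A with hxA | hAx
  · have hexp : 1 ≤ exp (x ^ 2 / (2 * T)) := one_le_exp (by positivity)
    nlinarith [mul_le_mul_of_nonneg_left hxA ha]
  · set E := exp (A ^ 2 / (2 * T))
    have hE : exp (A ^ 2 / T) = E ^ 2 := by rw [← exp_nat_mul]; ring_nf
    have haT : a * T ≤ c * A * E := by
      refine (pow_le_pow_iff_left₀ (by positivity) (by positivity) two_ne_zero).1 ?_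
      rwa [hE, ← mul_pow, ← mul_pow] at hslope
    have htangent : c * E + a * (x - A) ≤ c * exp (x ^ 2 / (2 * T)) := by
      have hcurve := mul_le_mul_of_nonneg_left (exp_sq_div_two_mul_tangent_le hT A x) hc
      have hslope_le : a * (x - A) ≤ c * E * (A * (x - A) / T) := by
        rw [mul_div_assoc', le_div_iff₀ hT]
        nlinarith [mul_le_mul_of_nonneg_right haT (sub_nonneg.2 hAx.le)]
      nlinarith
    nlinarith [mul_le_mul_of_nonneg_left (one_le_exp (by positivity) : 1 ≤ E) hc]

lemma exp_one_sq_mul_pi_le : exp 1 ^ 2 * π ≤ 24 := by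
  nlinarith [exp_one_lt_d9, pi_lt_d2, exp_pos 1, pi_pos]

lemma sq_abs_mul_le_mul_log_one_add {T w₀ : ℝ} (hT : 0 < T) (hw₀ : 0 < w₀) (u : ℝ) :
    (|u| * T) ^ 2 ≤ (w₀ / (exp 1 * √π * √T)) ^ 2 *
      (T * log (1 + 24 * T ^ 2 * u ^ 2 / w₀ ^ 2)) * (1 + 24 * T ^ 2 * u ^ 2 / w₀ ^ 2) := by
  set z := 24 * T ^ 2 * u ^ 2 / w₀ ^ 2
  have hw₀z : w₀ ^ 2 * z = 24 * T ^ 2 * u ^ 2 := by simp only [z]; field_simp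
  have hc : (w₀ / (exp 1 * √π * √T)) ^ 2 * (exp 1 ^ 2 * π * T) = w₀ ^ 2 := by
    rw [div_pow, mul_pow, mul_pow, sq_sqrt pi_pos.le, sq_sqrt hT.le]
    field_simp
  have hlog : z ≤ (1 + z) * log (1 + z) := by
    have h := mul_le_mul_of_nonneg_left (one_sub_inv_le_log_of_pos (by positivity : 0 < 1 + z))
      (by positivity : 0 ≤ 1 + z)
    rwa [mul_sub, mul_one, mul_inv_cancel₀ (by positivity), add_sub_cancel_left] at h
  have heπ : 0 < exp 1 ^ 2 * π := by positivity
  refine le_of_mul_le_mul_right ?_ heπ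
  calc (|u| * T) ^ 2 * (exp 1 ^ 2 * π)
      ≤ 24 * T ^ 2 * u ^ 2 := by
        rw [mul_pow, sq_abs]
        nlinarith [mul_le_mul_of_nonneg_left exp_one_sq_mul_pi_le
          (by positivity : 0 ≤ u ^ 2 * T ^ 2)]
    _ ≤ w₀ ^ 2 * ((1 + z) * log (1 + z)) := by rw [← hw₀z]; gcongr
    _ = _ := by rw [← hc]; ring

/-- **Fenchel conjugate bound (Lemma 18 of Orabona & Pál).**
For `i(x) = (w₀/(e√π√T)) exp(x²/(2T))`, the Fenchel conjugate satisfies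
`i*(u) = sup_x (u·x - i(x)) ≤ |u| √(T ln(1 + 24T²u²/w₀²)) - w₀/(e√π√T)`,
encoded pointwise: for every `x`, `u·x - i(x)` is at most the right-hand side. -/
theorem fenchel_conjugate_bound
    (T : ℕ) (hT : 1 ≤ T)
    (w₀ : ℝ) (hw₀ : 0 < w₀)
    (i : ℝ → ℝ)
    (hi : ∀ x : ℝ, i x =
      (w₀ / (Real.exp 1 * Real.sqrt Real.pi * Real.sqrt T)) * Real.exp (x ^ 2 / (2 * T)))
    (u : ℝ) :
    ∀ x : ℝ, u * x - i x ≤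
      |u| * Real.sqrt ((T : ℝ) * Real.log (1 + 24 * (T : ℝ) ^ 2 * u ^ 2 / w₀ ^ 2)) -
        w₀ / (Real.exp 1 * Real.sqrt Real.pi * Real.sqrt T) := by
  intro x
  have hTpos : (0 : ℝ) < T := by exact_mod_cast hT
  set z := 24 * (T : ℝ) ^ 2 * u ^ 2 / w₀ ^ 2
  have hTL : 0 ≤ (T : ℝ) * log (1 + z) :=
    mul_nonneg hTpos.le (log_nonneg (le_add_of_nonneg_right (by positivity)))
  have hA : √((T : ℝ) * log (1 + z)) ^ 2 = T * log (1 + z) := sq_sqrt hTL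
  have hE : exp (√((T : ℝ) * log (1 + z)) ^ 2 / T) = 1 + z := by
    rw [hA, mul_div_cancel_left₀ _ hTpos.ne', exp_log (by positivity)]
  have key := mul_sub_mul_exp_sq_div_le (c := w₀ / (exp 1 * √π * √T)) hTpos (abs_nonneg u)
    (by positivity) (sqrt_nonneg _)
    (by rw [hE, hA]; exact sq_abs_mul_le_mul_log_one_add hTpos hw₀ u) |x|
  rw [hi x, ← sq_abs x]
  linarith [le_abs_self (u * x), abs_mul u x]
end

section
/- Let L > 0, w₀ > 0, m₀, m_π ∈ ℝ^d, and let Σ be a symmetric positive-definite d×d real matrix. Define m_1 = m₀ and, recursively for t ≥ 2, m_t = m₀ − (Σ_{s=1}^{t−1} Σ⁻¹(m_s − m_π)) / (L t) · (w₀ − Σ_{s=1}^{t−1} ⟨(1/L) Σ⁻¹(m_s − m_π), m_s − m₀⟩). Define the maps φ_t : ℝ^d → ℝ^d by φ_1(x) = x and, for t ≥ 2, by the coin Wasserstein update φ_t(x) = x − (Σ_{s=1}^{t−1} c_s) / (L t) · (w₀ − Σ_{s=1}^{t−1} ⟨(1/L) c_s, φ_s(x) − x⟩) with constant gradient fields c_s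 = Σ⁻¹(m_s − m_π). Then for every t ≥ 1 and every x ∈ ℝ^d, φ_t is the translation φ_t(x) = m_t + (x − m₀); in particular φ_t(x) − x = m_t − m₀ does not depend on x. -/
open scoped RealInnerProductSpace

open Finset

section CoinDisplacement

variable {E : Type*} [NormedAddCommGroup E] [InnerProductSpace ℝ E]

/-- The displacement `φ_t(x) - x` of the coin update, as a function of the earlier displacements
`δ s = φ_s(x) - x`; since the gradient fields `c s` are constant, nothing else of `x` enters. -/
noncomputable def coinDisplacement (L w₀ : ℝ) (c : ℕ → E) (t : ℕ) (δ : ℕ → E) : E :=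
  -((w₀ - ∑ s ∈ Icc 1 (t - 1), ⟪(1 / L) • c s, δ s⟫) / (L * t)) •
    ∑ s ∈ Icc 1 (t - 1), c s

theorem coinDisplacement_congr (L w₀ : ℝ) (c : ℕ → E) (t : ℕ) {δ δ' : ℕ → E}
    (h : ∀ s ∈ Icc 1 (t - 1), δ s = δ' s) :
    coinDisplacement L w₀ c t δ = coinDisplacement L w₀ c t δ' := by
  unfold coinDisplacement
  rw [sum_congr rfl fun s hs => congrArg _ (h s hs)]

theorem eq_of_coinDisplacement_recursion (L w₀ : ℝ) (c : ℕ → E) {δ δ' : ℕ → E}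
    (h₁ : δ 1 = δ' 1)
    (hδ : ∀ t, 2 ≤ t → δ t = coinDisplacement L w₀ c t δ)
    (hδ' : ∀ t, 2 ≤ t → δ' t = coinDisplacement L w₀ c t δ') :
    ∀ t, 1 ≤ t → δ t = δ' t := by
  intro t
  induction t using Nat.strong_induction_on with
  | _ t ih =>
    intro ht
    obtain rfl | ht₂ := eq_or_lt_of_le ht
    · exact h₁
    · rw [hδ t ht₂, hδ' t ht₂]
      refine coinDisplacement_congr L w₀ c t fun s hs => ?_
      rw [mem_Icc] at hs
      exact ih s (by omega) hs.1

end CoinDisplacement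

theorem coin_wgd_gaussian_translation_general {d : ℕ}
    (L w₀ : ℝ)
    (m₀ : EuclideanSpace ℝ (Fin d))
    (c : ℕ → EuclideanSpace ℝ (Fin d))
    (m : ℕ → EuclideanSpace ℝ (Fin d))
    (φ : ℕ → EuclideanSpace ℝ (Fin d) → EuclideanSpace ℝ (Fin d))
    (hm1 : m 1 = m₀)
    (hm : ∀ t, 2 ≤ t → m t = m₀ -
      ((w₀ - ∑ s ∈ Finset.Icc 1 (t - 1), ⟪(1 / L) • c s, m s - m₀⟫) / (L * t)) •
        ∑ s ∈ Finset.Icc 1 (t - 1), c s)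
    (hφ1 : ∀ x, φ 1 x = x)
    (hφ : ∀ t, 2 ≤ t → ∀ x, φ t x = x -
      ((w₀ - ∑ s ∈ Finset.Icc 1 (t - 1), ⟪(1 / L) • c s, φ s x - x⟫) / (L * t)) •
        ∑ s ∈ Finset.Icc 1 (t - 1), c s) :
    ∀ t, 1 ≤ t → ∀ x, φ t x = m t + (x - m₀) := by
  intro t ht x
  have hdisp : φ t x - x = m t - m₀ :=
    eq_of_coinDisplacement_recursion L w₀ c
      (δ := fun s => φ s x - x) (δ' := fun s => m s - m₀)
      (by simp only [hφ1, hm1, sub_self])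
      (fun t ht => by rw [hφ t ht x, coinDisplacement, neg_smul, sub_sub_cancel_left])
      (fun t ht => by rw [hm t ht, coinDisplacement, neg_smul, sub_sub_cancel_left])
      t ht
  linear_combination (norm := module) hdisp

/-- **Coin Wasserstein gradient descent between Gaussians is a translation
(key step of Proposition 3.4).** With constant gradient fields `c_s = Σ⁻¹(m_s - m_π)`,
the transport maps `φ_t` of Algorithm 1 satisfy `φ_t(x) = m_t + (x - m₀)` for all `t ≥ 1`,
where `m_t` obeys the mean recursion; in particular `φ_t(x) - x` does not depend on `x`. -/
theorem coin_wgd_gaussian_translation {d : ℕ}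
    (L w₀ : ℝ) (hL : 0 < L) (hw₀ : 0 < w₀)
    (m₀ mπ : EuclideanSpace ℝ (Fin d))
    (S : Matrix (Fin d) (Fin d) ℝ) (hS : S.PosDef)
    (c : ℕ → EuclideanSpace ℝ (Fin d))
    (m : ℕ → EuclideanSpace ℝ (Fin d))
    (φ : ℕ → EuclideanSpace ℝ (Fin d) → EuclideanSpace ℝ (Fin d))
    (hc : ∀ s, c s = (EuclideanSpace.equiv (Fin d) ℝ).symm
      (S⁻¹.mulVec (EuclideanSpace.equiv (Fin d) ℝ (m s - mπ))))
    (hm1 : m 1 = m₀)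
    (hm : ∀ t, 2 ≤ t → m t = m₀ -
      ((w₀ - ∑ s ∈ Finset.Icc 1 (t - 1), ⟪(1 / L) • c s, m s - m₀⟫) / (L * t)) •
        ∑ s ∈ Finset.Icc 1 (t - 1), c s)
    (hφ1 : ∀ x, φ 1 x = x)
    (hφ : ∀ t, 2 ≤ t → ∀ x, φ t x = x -
      ((w₀ - ∑ s ∈ Finset.Icc 1 (t - 1), ⟪(1 / L) • c s, φ s x - x⟫) / (L * t)) •
        ∑ s ∈ Finset.Icc 1 (t - 1), c s) :
    ∀ t, 1 ≤ t → ∀ x, φ t x = m t + (x - m₀) :=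
  coin_wgd_gaussian_translation_general L w₀ m₀ c m φ hm1 hm hφ1 hφ
end
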